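/- For all v ∈ ℝ^{p+2} with v ≠ 0, ∫_B e^{ic⟨v,u⟩} du = (2π/c)^{p/2+1} · J_{p/2+1}(c‖v‖)/‖v‖^{p/2+1}, where B is the closed unit ball in ℝ^{p+2}, c > 0, and J_ν is the Bessel function of the first kind. -/

import Mathlib

open MeasureTheory
open intervalIntegral
open scoped Nat RealInnerProductSpace

/-- The Bessel function of the first kind of order `ν`, defined by its power series. -/
noncomputable def besselJ (ν x : ℝ) : ℝ :=
  ∑' m : ℕ, (-1 : ℝ) ^ m / ((m ! : ℝ) * Real.Gamma (ν + m + 1)) * (x / 2) ^ (2 * m) * (x / 2) ^ ν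



/-- Real Beta integral in terms of Gamma functions. -/
lemma realBeta (a b : ℝ) (ha : 0 < a) (hb : 0 < b) :
    ∫ s in (0:ℝ)..1, s ^ (a-1) * (1-s) ^ (b-1)
      = Real.Gamma a * Real.Gamma b / Real.Gamma (a+b) := by
  have h := Complex.Gamma_mul_Gamma_eq_betaIntegral (s := a) (t := b)
    (by simpa using ha) (by simpa using hb)
  have hβ : Complex.betaIntegral a b
      = ((∫ s in (0:ℝ)..1, s ^ (a-1) * (1-s) ^ (b-1) : ℝ) : ℂ) := by
    rw [Complex.betaIntegral, ← intervalIntegral.integral_ofReal]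
    refine intervalIntegral.integral_congr (fun x hx => ?_)
    rw [Set.uIcc_of_le (by norm_num : (0:ℝ) ≤ 1)] at hx
    rw [Complex.ofReal_mul, Complex.ofReal_cpow hx.1,
      Complex.ofReal_cpow (by linarith [hx.2] : (0:ℝ) ≤ 1 - x)]
    push_cast
    ring
  rw [hβ, ← Complex.ofReal_add a b, Complex.Gamma_ofReal, Complex.Gamma_ofReal,
    Complex.Gamma_ofReal, ← Complex.ofReal_mul, ← Complex.ofReal_mul] at h
  have := Complex.ofReal_injective h
  have hG : Real.Gamma (a+b) ≠ 0 := (Real.Gamma_pos_of_pos (by linarith)).ne'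
  field_simp [this]
  rw [this]; ring

open MeasureTheory
open intervalIntegral

lemma cont_integrand (m : ℕ) (α : ℝ) (hα : 0 ≤ α) :
    Continuous (fun t : ℝ => t ^ (2*m) * (1-t^2) ^ α) := by
  refine (continuous_pow _).mul ?_
  refine continuous_iff_continuousAt.2 fun x => ?_
  exact (Real.continuousAt_rpow_const _ _ (Or.inr hα)).comp (by fun_prop)

lemma moment_int (m : ℕ) (α : ℝ) (hα : 0 ≤ α) :
    ∫ t in (-1:ℝ)..1, t ^ (2*m) * (1-t^2) ^ α
      = Real.Gamma ((m:ℝ) + 1/2) * Real.Gamma (α+1)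
        / Real.Gamma (((m:ℝ) + 1/2) + (α+1)) := by
  have hcont := cont_integrand m α hα
  -- symmetry
  have heven : ∫ t in (-1:ℝ)..0, t ^ (2*m) * (1-t^2) ^ α
      = ∫ t in (0:ℝ)..1, t ^ (2*m) * (1-t^2) ^ α := by
    have h1 := intervalIntegral.integral_comp_neg (a := (0:ℝ)) (b := 1)
      (fun t : ℝ => t ^ (2*m) * (1-t^2) ^ α)
    simp only [neg_zero] at h1
    rw [← h1]
    refine intervalIntegral.integral_congr (fun x _ => ?_)
    simp [neg_pow, pow_mul, neg_sq]
  have hsplit : ∫ t in (-1:ℝ)..1, t ^ (2*m) * (1-t^2) ^ α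
      = 2 * ∫ t in (0:ℝ)..1, t ^ (2*m) * (1-t^2) ^ α := by
    rw [← intervalIntegral.integral_add_adjacent_intervals (a := (-1:ℝ)) (b := 0) (c := 1)
      (hcont.intervalIntegrable _ _) (hcont.intervalIntegrable _ _), heven]
    ring
  -- substitution s = t^2
  have himg : (fun x : ℝ => x^2) '' Set.Ioo 0 1 = Set.Ioo 0 1 := by
    ext y
    constructor
    · rintro ⟨x, hx, rfl⟩
      simp only [Set.mem_Ioo]
      constructor <;> nlinarith [hx.1, hx.2]
    · rintro ⟨h0, h1⟩
      exact ⟨Real.sqrt y, ⟨Real.sqrt_pos.2 h0, by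
        rw [show (1:ℝ) = Real.sqrt 1 by simp]
        exact Real.sqrt_lt_sqrt h0.le h1⟩, Real.sq_sqrt h0.le⟩
  have hinj : Set.InjOn (fun x : ℝ => x^2) (Set.Ioo 0 1) := by
    intro a ha b hb h
    have h' : a^2 = b^2 := h
    rw [← Real.sqrt_sq ha.1.le, ← Real.sqrt_sq hb.1.le, h']
  have hderiv : ∀ x ∈ Set.Ioo (0:ℝ) 1,
      HasDerivWithinAt (fun x : ℝ => x^2) (2*x) (Set.Ioo 0 1) x := by
    intro x _
    simpa [mul_comm] using (hasDerivAt_pow 2 x).hasDerivWithinAt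
  have hchg := integral_image_eq_integral_abs_deriv_smul (f' := fun x : ℝ => 2*x)
    measurableSet_Ioo hderiv hinj
    (fun s : ℝ => s ^ ((m:ℝ) - 1/2) * (1-s) ^ α)
  rw [himg] at hchg
  have hptwise : ∀ x ∈ Set.Ioo (0:ℝ) 1,
      |2*x| • ((x^2) ^ ((m:ℝ) - 1/2) * (1-x^2) ^ α)
        = 2 * (x ^ (2*m) * (1-x^2) ^ α) := by
    intro x hx
    have hx0 : 0 < x := hx.1
    rw [abs_of_pos (by linarith), smul_eq_mul]
    have : (x^2 : ℝ) ^ ((m:ℝ) - 1/2) = x ^ (2*(m:ℝ) - 1) := by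
      rw [← Real.rpow_natCast x 2, ← Real.rpow_mul hx0.le]
      ring_nf
    rw [this]
    have : (2*x) * x ^ (2*(m:ℝ) - 1) = 2 * x ^ (2*m : ℕ) := by
      rw [← Real.rpow_natCast x (2*m)]
      rw [show ((2*m : ℕ) : ℝ) = (2*(m:ℝ)-1) + 1 by push_cast; ring]
      rw [Real.rpow_add hx0, Real.rpow_one]
      ring
    rw [← mul_assoc, ← mul_assoc, this]
  have hchg2 : ∫ s in Set.Ioo (0:ℝ) 1, s ^ ((m:ℝ) - 1/2) * (1-s) ^ α
      = ∫ x in Set.Ioo (0:ℝ) 1, 2 * (x ^ (2*m) * (1-x^2) ^ α) := by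
    rw [hchg]
    exact setIntegral_congr_fun measurableSet_Ioo hptwise
  have hbeta := realBeta ((m:ℝ) + 1/2) (α + 1) (by positivity) (by linarith)
  rw [hsplit, ← hbeta]
  rw [intervalIntegral.integral_of_le (by norm_num : (0:ℝ) ≤ 1),
    intervalIntegral.integral_of_le (by norm_num : (0:ℝ) ≤ 1),
    MeasureTheory.integral_Ioc_eq_integral_Ioo, MeasureTheory.integral_Ioc_eq_integral_Ioo]
  rw [show (m:ℝ) + 1/2 - 1 = (m:ℝ) - 1/2 by ring, show α + 1 - 1 = α by ring]
  rw [hchg2, MeasureTheory.integral_const_mul]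

lemma gamma_half (m : ℕ) :
    Real.Gamma ((m:ℝ) + 1/2) = Real.sqrt Real.pi * (2*m)! / (4^m * m !) := by
  have h := Real.Gamma_mul_Gamma_add_half ((m:ℝ) + 1/2)
  rw [show (m:ℝ) + 1/2 + 1/2 = (m:ℝ) + 1 by ring,
    Real.Gamma_nat_eq_factorial m,
    show (1 : ℝ) - 2*((m:ℝ) + 1/2) = -(2*m:ℕ) by push_cast; ring,
    show (2:ℝ)*((m:ℝ)+1/2) = ((2*m:ℕ):ℝ) + 1 by push_cast; ring,
    Real.Gamma_nat_eq_factorial (2*m),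
    Real.rpow_neg (by norm_num), Real.rpow_natCast] at h
  have h4 : (2:ℝ) ^ (2*m) = 4 ^ m := by rw [pow_mul]; norm_num
  have hm : (0:ℝ) < m ! := by positivity
  field_simp [h4] at h ⊢
  rw [h4] at h
  nlinarith [h, Real.sqrt_nonneg Real.pi]

lemma cos_int (x α : ℝ) (hα : 0 ≤ α) :
    ∫ t in (-1:ℝ)..1, Real.cos (x*t) * (1-t^2) ^ α
      = Real.sqrt Real.pi * Real.Gamma (α+1) *
        ∑' m : ℕ, (-1:ℝ)^m / (m ! * Real.Gamma ((α + 1/2) + m + 1)) * (x/2)^(2*m) := by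
  set f : ℕ → ℝ → ℝ :=
    fun m t => ((-1:ℝ)^m * x^(2*m) / (2*m)!) * (t^(2*m) * (1-t^2)^α) with hf
  have hsum : ∀ t : ℝ, HasSum (fun m => f m t) (Real.cos (x*t) * (1-t^2)^α) := by
    intro t
    have h := (Real.hasSum_cos (x*t)).mul_right ((1-t^2)^α)
    convert h using 2 with m
    rfl
    simp only [hf, mul_pow]
    ring
  have hmeas : ∀ m : ℕ, AEStronglyMeasurable (f m)
      (volume.restrict (Set.Ioc (-1:ℝ) 1)) := by
    intro m
    exact (continuous_const.mul (cont_integrand m α hα)).aestronglyMeasurable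
  have hbound : ∀ m : ℕ, ∀ t ∈ Set.Ioc (-1:ℝ) 1, ‖f m t‖ ≤ |x|^(2*m) / (2*m)! := by
    intro m t ht
    have ht1 : |t| ≤ 1 := abs_le.2 ⟨ht.1.le, ht.2⟩
    have h1 : (1 - t^2 : ℝ) ^ α ≤ 1 :=
      Real.rpow_le_one (by nlinarith [abs_le.1 ht1]) (by nlinarith [abs_le.1 ht1]) hα
    have h0 : (0:ℝ) ≤ (1 - t^2) ^ α := Real.rpow_nonneg (by nlinarith [abs_le.1 ht1]) _
    have ht2 : |t| ^ (2*m) ≤ 1 := pow_le_one₀ (abs_nonneg t) ht1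
    have hnorm : ‖f m t‖ = |x|^(2*m) / (2*m)! * (|t|^(2*m) * (1-t^2)^α) := by
      simp only [hf, Real.norm_eq_abs, abs_mul, abs_div, abs_pow, abs_neg, abs_one, one_pow,
        one_mul, abs_of_nonneg h0, Nat.abs_cast]
    rw [hnorm]
    calc |x| ^ (2*m) / (2*m)! * (|t| ^ (2*m) * (1 - t^2) ^ α)
        ≤ |x| ^ (2*m) / (2*m)! * (1 * 1) := by
          apply mul_le_mul_of_nonneg_left _ (by positivity)
          exact mul_le_mul ht2 h1 h0 zero_le_one
      _ = |x| ^ (2*m) / (2*m)! := by ring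
  have hlint : ∀ m : ℕ, ∫⁻ t, ‖f m t‖₊ ∂(volume.restrict (Set.Ioc (-1:ℝ) 1))
      ≤ ENNReal.ofReal (|x|^(2*m) / (2*m)!) * 2 := by
    intro m
    have : ∫⁻ t, ‖f m t‖₊ ∂(volume.restrict (Set.Ioc (-1:ℝ) 1))
        ≤ ∫⁻ _, ENNReal.ofReal (|x|^(2*m) / (2*m)!)
            ∂(volume.restrict (Set.Ioc (-1:ℝ) 1)) := by
      refine MeasureTheory.lintegral_mono_ae ?_
      filter_upwards [MeasureTheory.ae_restrict_mem measurableSet_Ioc] with t ht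
      rw [← enorm_eq_nnnorm, ← ofReal_norm]
      exact ENNReal.ofReal_le_ofReal (hbound m t ht)
    refine this.trans ?_
    rw [MeasureTheory.lintegral_const, Measure.restrict_apply_univ, Real.volume_Ioc]
    gcongr
    rw [show (1:ℝ) - (-1) = 2 by norm_num]
    exact le_of_eq (ENNReal.ofReal_ofNat 2)
  have hsummable : Summable (fun m : ℕ => |x|^(2*m) / (2*m)!) :=
    (Real.summable_pow_div_factorial |x|).comp_injective
      (mul_right_injective₀ two_ne_zero)
  have hfin : ∑' m : ℕ, ∫⁻ t, ‖f m t‖₊ ∂(volume.restrict (Set.Ioc (-1:ℝ) 1)) ≠ ⊤ := by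
    refine ne_top_of_le_ne_top ?_ (ENNReal.tsum_le_tsum hlint)
    rw [ENNReal.tsum_mul_right, ← ENNReal.ofReal_tsum_of_nonneg
      (fun m => by positivity) hsummable]
    exact ENNReal.mul_ne_top ENNReal.ofReal_ne_top (by norm_num)
  have hswap := MeasureTheory.integral_tsum hmeas hfin
  have hLHS : ∫ t in (-1:ℝ)..1, Real.cos (x*t) * (1-t^2) ^ α
      = ∑' m : ℕ, ∫ t in Set.Ioc (-1:ℝ) 1, f m t := by
    rw [intervalIntegral.integral_of_le (by norm_num : (-1:ℝ) ≤ 1), ← hswap]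
    refine setIntegral_congr_fun measurableSet_Ioc (fun t _ => ?_)
    exact ((hsum t).tsum_eq).symm
  rw [hLHS]
  have hterm : ∀ m : ℕ, ∫ t in Set.Ioc (-1:ℝ) 1, f m t
      = (Real.sqrt Real.pi * Real.Gamma (α+1)) *
        ((-1:ℝ)^m / (m ! * Real.Gamma ((α + 1/2) + m + 1)) * (x/2)^(2*m)) := by
    intro m
    have : ∫ t in Set.Ioc (-1:ℝ) 1, f m t
        = ((-1:ℝ)^m * x^(2*m) / (2*m)!) * ∫ t in (-1:ℝ)..1, t^(2*m) * (1-t^2)^α := by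
      rw [intervalIntegral.integral_of_le (by norm_num : (-1:ℝ) ≤ 1),
        ← MeasureTheory.integral_const_mul]
    have h1 : Real.Gamma ((m:ℝ) + 1/2 + (α+1)) = Real.Gamma ((α + 1/2) + m + 1) := by
      congr 1; ring
    have h2 : ((2*m)! : ℝ) ≠ 0 := by positivity
    have h3 : (m ! : ℝ) ≠ 0 := by positivity
    have h4 : Real.Gamma ((α + 1/2) + m + 1) ≠ 0 :=
      (Real.Gamma_pos_of_pos (by positivity)).ne'
    have h5 : ((x:ℝ)/2)^(2*m) = x^(2*m) / 4^m := by
      rw [div_pow]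
      congr 1
      rw [pow_mul]; norm_num
    rw [this, moment_int m α hα, gamma_half m, h1, h5]
    field_simp
  rw [tsum_congr hterm, tsum_mul_left]

lemma sin_int (x α : ℝ) : ∫ t in (-1:ℝ)..1, Real.sin (x*t) * (1-t^2) ^ α = 0 := by
  have h1 := intervalIntegral.integral_comp_neg (a := (-1:ℝ)) (b := 1)
    (fun t : ℝ => Real.sin (x*t) * (1-t^2) ^ α)
  norm_num at h1
  linarith

lemma exp_int (x α : ℝ) (hα : 0 ≤ α) :
    ∫ t in (-1:ℝ)..1, Complex.exp (Complex.I * x * t) * ((1-t^2) ^ α : ℝ)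
      = ((Real.sqrt Real.pi * Real.Gamma (α+1) *
          ∑' m : ℕ, (-1:ℝ)^m / (m ! * Real.Gamma ((α + 1/2) + m + 1)) * (x/2)^(2*m) : ℝ) : ℂ) := by
  have hcontr : Continuous (fun t : ℝ => (1-t^2) ^ α) := by
    have := cont_integrand 0 α hα
    simpa using this
  have hsplit : ∀ t : ℝ, Complex.exp (Complex.I * x * t) * ((1-t^2) ^ α : ℝ)
      = ((Real.cos (x*t) * (1-t^2) ^ α : ℝ) : ℂ)
        + ((Real.sin (x*t) * (1-t^2) ^ α : ℝ) : ℂ) * Complex.I := by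
    intro t
    rw [show Complex.I * x * t = ((x*t : ℝ) : ℂ) * Complex.I by push_cast; ring,
      Complex.exp_mul_I, ← Complex.ofReal_cos, ← Complex.ofReal_sin]
    push_cast
    ring
  rw [intervalIntegral.integral_congr (fun t _ => hsplit t)]
  have hc : IntervalIntegrable (fun t : ℝ => ((Real.cos (x*t) * (1-t^2) ^ α : ℝ) : ℂ))
      MeasureTheory.volume (-1) 1 :=
    (Complex.continuous_ofReal.comp
      (((Real.continuous_cos.comp (continuous_const.mul continuous_id)).mul
        hcontr))).intervalIntegrable _ _
  have hs : IntervalIntegrable (fun t : ℝ => ((Real.sin (x*t) * (1-t^2) ^ α : ℝ) : ℂ) * Complex.I)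
      MeasureTheory.volume (-1) 1 :=
    ((Complex.continuous_ofReal.comp
      (((Real.continuous_sin.comp (continuous_const.mul continuous_id)).mul
        hcontr))).mul continuous_const).intervalIntegrable _ _
  rw [intervalIntegral.integral_add hc hs, intervalIntegral.integral_mul_const,
    intervalIntegral.integral_ofReal, intervalIntegral.integral_ofReal,
    sin_int x α, cos_int x α hα]
  push_cast
  ring

lemma vol_slice (n : ℕ) (ρ : ℝ) (hρ : 0 ≤ ρ) :
    MeasureTheory.volume {y : Fin n → ℝ | ∑ j, y j ^ 2 ≤ ρ^2}
      = ENNReal.ofReal (ρ^n * (Real.sqrt Real.pi ^ n / Real.Gamma ((n:ℝ)/2+1))) := by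
  rcases Nat.eq_zero_or_pos n with hn | hn
  · subst hn
    have : {y : Fin 0 → ℝ | ∑ j, y j ^ 2 ≤ ρ^2} = Set.univ := by
      ext y
      simp [Finset.sum_empty, sq_nonneg]
    rw [this]
    have h1 : (MeasureTheory.volume : MeasureTheory.Measure (Fin 0 → ℝ)) Set.univ = 1 := by
      rw [MeasureTheory.volume_pi, MeasureTheory.Measure.pi_univ]
      simp
    rw [h1]
    simp [Real.Gamma_one]
  · have : Nonempty (Fin n) := ⟨⟨0, hn⟩⟩
    have he := EuclideanSpace.volume_preserving_symm_measurableEquiv_toLp (Fin n)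
    have hset : ((MeasurableEquiv.toLp 2 (Fin n → ℝ)).symm) ⁻¹' {y : Fin n → ℝ | ∑ j, y j ^ 2 ≤ ρ^2}
        = Metric.closedBall (0 : EuclideanSpace ℝ (Fin n)) ρ := by
      ext u
      simp only [Set.mem_preimage, Set.mem_setOf_eq, Metric.mem_closedBall,
        dist_zero_right, EuclideanSpace.norm_eq]
      rw [show ∀ z : EuclideanSpace ℝ (Fin n), (MeasurableEquiv.toLp 2 (Fin n → ℝ)).symm z = z.ofLp
          from fun _ => rfl]
      have hnorm : ∑ j : Fin n, ‖u j‖^2 = ∑ j, u j ^2 := by simp [sq_abs]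
      rw [hnorm]
      have hS : (0:ℝ) ≤ ∑ j, u j ^2 := by positivity
      constructor
      · intro h
        rw [show ρ = Real.sqrt (ρ^2) by rw [Real.sqrt_sq hρ]]
        exact Real.sqrt_le_sqrt h
      · intro h
        nlinarith [Real.sq_sqrt hS, Real.sqrt_nonneg (∑ j, u j ^2)]
    rw [← he.measure_preimage (by
        have : MeasurableSet {y : Fin n → ℝ | ∑ j, y j ^ 2 ≤ ρ^2} := by
          apply measurableSet_le <;> fun_prop
        exact this.nullMeasurableSet), hset,
      EuclideanSpace.volume_closedBall]
    rw [Fintype.card_fin]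
    rw [← ENNReal.ofReal_pow hρ, ← ENNReal.ofReal_mul (by positivity)]

lemma ball_slice (n : ℕ) (g : ℝ → ℂ) (hg : Continuous g) (hb : ∀ t, ‖g t‖ ≤ 1) :
    ∫ u in Metric.closedBall (0 : EuclideanSpace ℝ (Fin (n+1))) 1, g (u 0)
      = ∫ t in (-1:ℝ)..1,
          ((Real.sqrt Real.pi ^ n / Real.Gamma ((n:ℝ)/2+1) * (1-t^2) ^ ((n:ℝ)/2) : ℝ) : ℂ) * g t := by
  set S : Set (Fin (n+1) → ℝ) := {x | ∑ i, x i ^ 2 ≤ 1} with hS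
  set T : Set (ℝ × (Fin n → ℝ)) := {z | z.1^2 + ∑ j, z.2 j ^ 2 ≤ 1} with hT
  have hTm : MeasurableSet T := by
    apply measurableSet_le (by fun_prop) (by fun_prop)
  -- step 1 : Euclidean -> Pi
  have he := EuclideanSpace.volume_preserving_symm_measurableEquiv_toLp (Fin (n+1))
  have hpre1 : ((MeasurableEquiv.toLp 2 (Fin (n+1) → ℝ)).symm) ⁻¹' S
      = Metric.closedBall (0 : EuclideanSpace ℝ (Fin (n+1))) 1 := by
    ext u
    simp only [Set.mem_preimage, hS, Set.mem_setOf_eq, Metric.mem_closedBall,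
      dist_zero_right, EuclideanSpace.norm_eq]
    rw [show ((MeasurableEquiv.toLp 2 (Fin (n+1) → ℝ)).symm u : Fin (n+1) → ℝ) = u.ofLp from rfl]
    have hnorm : ∑ j : Fin (n+1), ‖u j‖^2 = ∑ j, u j ^2 := by simp [sq_abs]
    rw [hnorm]
    have hSnn : (0:ℝ) ≤ ∑ j, u j ^2 := by positivity
    constructor
    · intro h
      rw [show (1:ℝ) = Real.sqrt 1 by simp]
      exact Real.sqrt_le_sqrt h
    · intro h
      nlinarith [Real.sq_sqrt hSnn, Real.sqrt_nonneg (∑ j, u j ^2)]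
  have h1 : ∫ u in Metric.closedBall (0 : EuclideanSpace ℝ (Fin (n+1))) 1, g (u 0)
      = ∫ x in S, g (x 0) := by
    rw [← hpre1]
    exact he.setIntegral_preimage_emb (MeasurableEquiv.measurableEmbedding _)
      (fun y => g (y 0)) S
  -- step 2 : split the first coordinate
  have hφ := MeasureTheory.volume_preserving_piFinSuccAbove (fun _ : Fin (n+1) => ℝ) 0
  have hpre2 : (MeasurableEquiv.piFinSuccAbove (fun _ : Fin (n+1) => ℝ) 0) ⁻¹' T = S := by
    ext x
    simp only [Set.mem_preimage, hS, hT, Set.mem_setOf_eq,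
      MeasurableEquiv.piFinSuccAbove_apply, Fin.insertNthEquiv, Equiv.coe_fn_symm_mk,
      Fin.removeNth]
    rw [Fin.sum_univ_succAbove (fun i => x i ^ 2) 0]
  have h2 : ∫ x in S, g (x 0) = ∫ z in T, g z.1 := by
    rw [← hpre2]
    exact hφ.setIntegral_preimage_emb (MeasurableEquiv.measurableEmbedding _)
      (fun z => g z.1) T
  -- step 3 : Fubini
  have hTfin : MeasureTheory.volume T ≠ ⊤ := by
    have hsub : T ⊆ (Set.Icc (-1:ℝ) 1) ×ˢ (Set.univ.pi fun _ : Fin n => Set.Icc (-1:ℝ) 1) := by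
      rintro ⟨t, y⟩ hz
      have hz' : t^2 + ∑ j, y j ^ 2 ≤ 1 := hz
      have h0 : (0:ℝ) ≤ ∑ j, y j ^2 := by positivity
      refine ⟨⟨by nlinarith, by nlinarith⟩, fun j _ => ?_⟩
      have hj : y j ^2 ≤ ∑ i, y i ^2 :=
        Finset.single_le_sum (fun i _ => sq_nonneg (y i)) (Finset.mem_univ j)
      exact ⟨by nlinarith, by nlinarith⟩
    refine ne_top_of_le_ne_top ?_ (measure_mono hsub)
    rw [show (MeasureTheory.volume : MeasureTheory.Measure (ℝ × (Fin n → ℝ)))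
        = (MeasureTheory.volume).prod (MeasureTheory.volume) from rfl,
      MeasureTheory.Measure.prod_prod, MeasureTheory.volume_pi_pi, Real.volume_Icc]
    rw [Finset.prod_const]
    exact ENNReal.mul_ne_top ENNReal.ofReal_ne_top
      (ENNReal.pow_ne_top ENNReal.ofReal_ne_top)
  have hint : MeasureTheory.Integrable (T.indicator (fun z : ℝ × (Fin n → ℝ) => g z.1)) := by
    rw [MeasureTheory.integrable_indicator_iff hTm]
    exact MeasureTheory.Measure.integrableOn_of_bounded hTfin
      ((hg.comp continuous_fst).aestronglyMeasurable) (M := 1)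
      (Filter.Eventually.of_forall (fun z => hb z.1))
  have h3 : ∫ z in T, g z.1 = ∫ t : ℝ, ∫ y : Fin n → ℝ,
      T.indicator (fun z : ℝ × (Fin n → ℝ) => g z.1) (t, y) := by
    rw [← MeasureTheory.integral_indicator hTm]
    rw [show (MeasureTheory.volume : MeasureTheory.Measure (ℝ × (Fin n → ℝ)))
        = (MeasureTheory.volume).prod (MeasureTheory.volume) from rfl]
    exact MeasureTheory.integral_prod _ hint
  -- step 4 : inner integral
  set A : ℝ → Set (Fin n → ℝ) := fun t => {y | ∑ j, y j ^ 2 ≤ 1 - t^2} with hA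
  have hAm : ∀ t, MeasurableSet (A t) := fun t =>
    measurableSet_le (by fun_prop) (by fun_prop)
  have h4 : ∀ t : ℝ, ∫ y : Fin n → ℝ,
      T.indicator (fun z : ℝ × (Fin n → ℝ) => g z.1) (t, y)
      = (MeasureTheory.volume (A t)).toReal • g t := by
    intro t
    have hfiber : (fun y : Fin n → ℝ =>
        T.indicator (fun z : ℝ × (Fin n → ℝ) => g z.1) (t, y))
        = (A t).indicator (fun _ => g t) := by
      funext y
      have hmem : ((t, y) ∈ T) ↔ (y ∈ A t) := by
        simp only [hT, hA, Set.mem_setOf_eq]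
        constructor <;> intro h <;> linarith
      simp only [Set.indicator_apply, hmem]
    rw [hfiber, MeasureTheory.integral_indicator (hAm t), MeasureTheory.setIntegral_const]
    rfl
  -- step 5 : compute the slice volume
  have h5 : ∀ t ∈ Set.Ioc (-1:ℝ) 1, (MeasureTheory.volume (A t)).toReal • g t
      = ((Real.sqrt Real.pi ^ n / Real.Gamma ((n:ℝ)/2+1) * (1-t^2) ^ ((n:ℝ)/2) : ℝ) : ℂ) * g t := by
    intro t ht
    have ht2 : (0:ℝ) ≤ 1 - t^2 := by nlinarith [ht.1, ht.2]
    have hAt : A t = {y : Fin n → ℝ | ∑ j, y j ^ 2 ≤ (Real.sqrt (1-t^2))^2} := by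
      rw [hA]; simp only [Real.sq_sqrt ht2]
    have hpow : (Real.sqrt (1-t^2))^n = (1-t^2) ^ ((n:ℝ)/2) := by
      rw [Real.sqrt_eq_rpow, ← Real.rpow_natCast ((1-t^2) ^ ((1:ℝ)/2)) n,
        ← Real.rpow_mul ht2]
      congr 1
      ring
    rw [hAt, vol_slice n _ (Real.sqrt_nonneg _), ENNReal.toReal_ofReal (by positivity), hpow,
      Complex.real_smul, mul_comm ((1-t^2) ^ ((n:ℝ)/2)) _]
  -- step 6 : assemble
  rw [h1, h2, h3]
  have hsupp : ∀ t : ℝ, t ∉ Set.Icc (-1:ℝ) 1 →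
      (∫ y : Fin n → ℝ, T.indicator (fun z : ℝ × (Fin n → ℝ) => g z.1) (t, y)) = 0 := by
    intro t ht
    rw [h4 t]
    have hempty : A t = ∅ := by
      ext y
      simp only [hA, Set.mem_setOf_eq, Set.mem_empty_iff_false, iff_false, not_le]
      have h1t : 1 < t^2 := by
        simp only [Set.mem_Icc, not_and_or, not_le] at ht
        rcases ht with h | h <;> nlinarith
      nlinarith [Finset.sum_nonneg (fun j (_ : j ∈ Finset.univ) => sq_nonneg (y j))]
    rw [hempty]
    simp
  rw [← MeasureTheory.setIntegral_eq_integral_of_forall_compl_eq_zero hsupp,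
    MeasureTheory.integral_Icc_eq_integral_Ioc,
    intervalIntegral.integral_of_le (by norm_num : (-1:ℝ) ≤ 1)]
  refine MeasureTheory.setIntegral_congr_fun measurableSet_Ioc (fun t ht => ?_)
  rw [h4 t, h5 t ht]
theorem integral_exp_inner_ball (p : ℤ) (hp : -1 ≤ p) (d : ℕ) (hd : (d : ℤ) = p + 2)
    (c : ℝ) (hc : 0 < c) (v : EuclideanSpace ℝ (Fin d)) (hv : v ≠ 0) :
    ∫ u in Metric.closedBall (0 : EuclideanSpace ℝ (Fin d)) 1,
        Complex.exp (Complex.I * c * (⟪v, u⟫ : ℝ))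
      = ((2 * Real.pi / c) ^ ((p : ℝ) / 2 + 1)
          * besselJ ((p : ℝ) / 2 + 1) (c * ‖v‖) / ‖v‖ ^ ((p : ℝ) / 2 + 1) : ℝ) := by
  obtain ⟨n, rfl⟩ : ∃ n, d = n + 1 := ⟨d - 1, by omega⟩
  set r := ‖v‖ with hrdef
  have hrpos : 0 < r := norm_pos_iff.2 hv
  have hnp : (n : ℝ) = (p : ℝ) + 1 := by
    have : ((n:ℤ) : ℝ) = ((p+1 : ℤ) : ℝ) := by exact_mod_cast congrArg (fun z : ℤ => (z:ℝ)) (by omega : (n:ℤ) = p+1)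
    push_cast at this ⊢
    linarith
  -- orthonormal basis with b 0 = r⁻¹ • v
  have hnorm1 : ‖r⁻¹ • v‖ = 1 := by
    rw [norm_smul, norm_inv, Real.norm_eq_abs, abs_of_pos hrpos, ← hrdef]
    field_simp
  have hon : Orthonormal ℝ (Set.restrict {0} (fun _ : Fin (n+1) => r⁻¹ • v)) := by
    constructor
    · intro i
      exact hnorm1
    · intro i j hij
      exact absurd (Subtype.ext (i.2.trans j.2.symm)) hij
  obtain ⟨b, hb⟩ := hon.exists_orthonormalBasis_extension_of_card_eq
    (by simp [finrank_euclideanSpace])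
  have hb0 : b 0 = r⁻¹ • v := hb 0 rfl
  set f := b.repr.symm with hfdef
  have hinner : ∀ u : EuclideanSpace ℝ (Fin (n+1)), ⟪v, f u⟫ = r * u 0 := by
    intro u
    have hv' : v = r • b 0 := by
      rw [hb0, smul_smul]
      field_simp
      rw [one_smul]
    rw [hv', real_inner_smul_left]
    have h1 : ⟪b 0, f u⟫ = u 0 := by
      rw [← b.repr.inner_map_map (b 0) (f u), b.repr_self,
        hfdef, LinearIsometryEquiv.apply_symm_apply, EuclideanSpace.inner_single_left]
      simp
    rw [h1]
  -- change of variables by the isometry f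
  have hmp := (LinearIsometryEquiv.measurePreserving f :
    MeasureTheory.MeasurePreserving f)
  have hemb : MeasurableEmbedding f := f.toHomeomorph.measurableEmbedding
  have hpre : f ⁻¹' (Metric.closedBall (0 : EuclideanSpace ℝ (Fin (n+1))) 1)
      = Metric.closedBall 0 1 := by
    ext u
    simp [Metric.mem_closedBall, dist_zero_right]
  have hcv : ∫ u in Metric.closedBall (0 : EuclideanSpace ℝ (Fin (n+1))) 1,
      Complex.exp (Complex.I * c * (⟪v, u⟫ : ℝ))
      = ∫ u in Metric.closedBall (0 : EuclideanSpace ℝ (Fin (n+1))) 1,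
        Complex.exp (Complex.I * c * ((r * u 0 : ℝ) : ℂ)) := by
    have h2 := hmp.setIntegral_preimage_emb hemb
      (fun y => Complex.exp (Complex.I * c * (⟪v, y⟫ : ℝ)))
      (Metric.closedBall 0 1)
    rw [hpre] at h2
    rw [← h2]
    refine MeasureTheory.setIntegral_congr_fun measurableSet_closedBall
      (fun u _ => ?_)
    rw [hinner u]
  rw [hcv]
  -- slice
  set g : ℝ → ℂ := fun t => Complex.exp (Complex.I * c * ((r * t : ℝ) : ℂ)) with hgdef
  have hgc : Continuous g := by
    refine Complex.continuous_exp.comp ?_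
    fun_prop
  have hgb : ∀ t, ‖g t‖ ≤ 1 := by
    intro t
    rw [hgdef]
    simp only
    rw [show Complex.I * c * ((r * t : ℝ) : ℂ) = ((c * (r*t) : ℝ) : ℂ) * Complex.I by
      push_cast; ring]
    rw [Complex.norm_exp]
    simp
  rw [ball_slice n g hgc hgb]
  -- convert to the 1-D bessel integral
  set α : ℝ := (n:ℝ)/2 with hαdef
  have hα : 0 ≤ α := by positivity
  set Vn : ℝ := Real.sqrt Real.pi ^ n / Real.Gamma (α+1) with hVdef
  have hEq : ∫ t in (-1:ℝ)..1, ((Vn * (1-t^2) ^ α : ℝ) : ℂ) * g t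
      = (Vn : ℂ) * ∫ t in (-1:ℝ)..1,
          Complex.exp (Complex.I * ((c*r : ℝ) : ℂ) * t) * (((1-t^2) ^ α : ℝ) : ℂ) := by
    rw [← intervalIntegral.integral_const_mul]
    refine intervalIntegral.integral_congr fun t _ => ?_
    rw [hgdef]
    simp only
    rw [show Complex.I * ((c*r : ℝ) : ℂ) * (t:ℂ) = Complex.I * c * ((r * t : ℝ) : ℂ) by
      push_cast; ring]
    push_cast
    ring
  rw [hEq, exp_int (c*r) α hα]
  -- final numeric identity
  set ν : ℝ := (p:ℝ)/2 + 1 with hνdef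
  have hν : α + 1/2 = ν := by
    rw [hαdef, hνdef, hnp]; ring
  have hν2 : ν = ((n:ℝ)+1)/2 := by rw [hνdef, hnp]; ring
  rw [← Complex.ofReal_mul]
  congr 1
  simp only [hν]
  set S : ℝ := ∑' m : ℕ, (-1:ℝ)^m / (m ! * Real.Gamma (ν + m + 1)) * ((c*r)/2)^(2*m) with hSdef
  have hbes : besselJ ν (c*r) = S * ((c*r)/2) ^ ν := by
    rw [besselJ, ← tsum_mul_right]
  rw [hbes]
  have hΓpos : 0 < Real.Gamma (α+1) := Real.Gamma_pos_of_pos (by positivity)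
  have hsqrtpi : Real.sqrt Real.pi ^ n * Real.sqrt Real.pi = Real.pi ^ ν := by
    rw [hν2, Real.sqrt_eq_rpow, ← Real.rpow_natCast (Real.pi ^ ((1:ℝ)/2)) n,
      ← Real.rpow_mul Real.pi_nonneg, ← Real.rpow_add Real.pi_pos]
    congr 1
    ring
  have hrp : (2*Real.pi/c)^ν * ((c*r)/2)^ν / r^ν = Real.pi ^ ν := by
    rw [← Real.mul_rpow (by positivity) (by positivity),
      ← Real.div_rpow (by positivity) hrpos.le]
    congr 1
    field_simp
  have key : Vn * (Real.sqrt Real.pi * Real.Gamma (α+1) * S) = Real.pi ^ ν * S := by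
    rw [hVdef, ← hsqrtpi]
    field_simp
  rw [key, show (2*Real.pi/c)^ν * (S * ((c*r)/2)^ν) / r^ν
      = S * ((2*Real.pi/c)^ν * ((c*r)/2)^ν / r^ν) by ring, hrp]
  ring
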